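/- The function y(x) = 1/√(1+x) satisfies the nonlocal boundary value problem −p·y''(x) + (3(2√2−2)/4) y(x)⁵ = 0 on (0,1) with y(0) = 1, y(1) = √2/2, where p = ∫₀¹ y(s) ds = 2√2 − 2. -/

import Mathlib

/-!
On `(0, ∞)` the function `1 / √t` is the power `t ^ (-1/2)`, whose second derivative is
`(-1/2)(-3/2) t ^ (-5/2) = (3/4) (t ^ (-1/2)) ^ 5` and whose antiderivative is `2 √t`.
Shifting by one gives `y'' = (3/4) y ^ 5` and `p = ∫₀¹ y = 2√2 - 2`.
-/

open Real

lemma one_div_sqrt_eq_rpow {x : ℝ} (hx : 0 ≤ x) : 1 / √x = x ^ (-(1 / 2) : ℝ) := by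
  rw [sqrt_eq_rpow, rpow_neg hx, one_div]

lemma deriv_deriv_rpow_const (r x : ℝ) :
    deriv (deriv fun t : ℝ => t ^ r) x = r * (r - 1) * x ^ (r - 2) := by
  simp only [deriv_rpow_const', deriv_const_mul_field, Real.deriv_rpow_const]
  ring_nf

lemma deriv_deriv_comp_const_add (f : ℝ → ℝ) (a x : ℝ) :
    deriv (deriv fun t => f (a + t)) x = deriv (deriv f) (a + x) := by
  have h_shift : deriv (fun t => f (a + t)) = fun t => deriv f (a + t) :=
    funext fun t => deriv_comp_const_add f a t
  rw [h_shift, deriv_comp_const_add (deriv f) a x]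

lemma deriv_deriv_one_div_sqrt {x : ℝ} (hx : 0 < x) :
    deriv (deriv fun t => 1 / √t) x = 3 / 4 * (1 / √x) ^ 5 := by
  have h_near : (fun t => 1 / √t) =ᶠ[nhds x] fun t => t ^ (-(1 / 2) : ℝ) := by
    filter_upwards [lt_mem_nhds hx] with t ht using one_div_sqrt_eq_rpow ht.le
  rw [h_near.deriv.deriv_eq, deriv_deriv_rpow_const, one_div_sqrt_eq_rpow hx.le,
    ← rpow_natCast, ← rpow_mul hx.le]
  norm_num

lemma integral_one_div_sqrt {a b : ℝ} (ha : 0 ≤ a) (hb : 0 ≤ b) :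
    ∫ s in a..b, 1 / √s = 2 * √b - 2 * √a := by
  have h_rpow : ∫ s in a..b, 1 / √s = ∫ s in a..b, s ^ (-(1 / 2) : ℝ) := by
    refine intervalIntegral.integral_congr fun s hs => one_div_sqrt_eq_rpow ?_
    exact (le_min ha hb).trans hs.1
  rw [h_rpow, integral_rpow (Or.inl (by norm_num)), sqrt_eq_rpow, sqrt_eq_rpow]
  norm_num
  ring

theorem inv_sqrt_solves_nonlocal_bvp_p :
    let y : ℝ → ℝ := fun x => 1 / Real.sqrt (1 + x)
    let p : ℝ := ∫ s in (0 : ℝ)..1, y s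
    p = 2 * Real.sqrt 2 - 2 ∧
      (∀ x ∈ Set.Ioo (0 : ℝ) 1,
        -p * deriv (deriv y) x + 3 * (2 * Real.sqrt 2 - 2) / 4 * y x ^ 5 = 0) ∧
      y 0 = 1 ∧ y 1 = Real.sqrt 2 / 2 := by
  intro y p
  have hp : p = 2 * √2 - 2 := by
    simp only [p, y, intervalIntegral.integral_comp_add_left (fun t => 1 / √t)]
    rw [integral_one_div_sqrt (by norm_num) (by norm_num)]
    norm_num
  refine ⟨hp, fun x hx => ?_, by simp [y], ?_⟩
  · rw [deriv_deriv_comp_const_add (fun t => 1 / √t),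
      deriv_deriv_one_div_sqrt (by linarith [hx.1]), ← hp]
    ring
  · rw [sqrt_div_self']
    norm_num [y]
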